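/- Let G be a finite group and p a prime dividing |G| such that p^{2·ν_p(exp(G))} · exp(Out(G)) ≤ p^{ν_p(|G|)}. Then for every automorphism α of G, the least common multiple over all x ∈ G of the orders of the permutations A_{x,α} is at most |G|. -/

import Mathlib

/-- The bijective affine map `A_{x,α} : g ↦ x * α g` as a permutation of `G`. -/
def Aff {G : Type*} [Group G] (x : G) (α : G ≃* G) : Equiv.Perm G :=
  α.toEquiv.trans (Equiv.mulLeft x)

/-- The group of inner automorphisms of `G`, i.e. the range of `MulAut.conj : G →* MulAut G`. -/
def Inn (G : Type*) [Group G] : Subgroup (MulAut G) := (MulAut.conj : G →* MulAut G).range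

instance Inn.normal (G : Type*) [Group G] : (Inn G).Normal := by
  constructor
  rintro _ ⟨g, rfl⟩ σ
  exact ⟨σ g, by ext h; simp [MulAut.conj]⟩

/-- The outer automorphism group `Out(G) := Aut(G)/Inn(G)`. -/
def Out (G : Type*) [Group G] := MulAut G ⧸ Inn G

instance (G : Type*) [Group G] : Group (Out G) := QuotientGroup.Quotient.group (Inn G)

/-!
Some power `α ^ e` with `e = exp(Out G)` is inner, say conjugation by `c`, and `A_{x,α} ^ e` is
again affine with linear part `α ^ e`. An affine map `g ↦ y * c * g * c⁻¹` has `n`-th power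
`g ↦ (y * c) ^ n * g * c⁻¹ ^ n`, which is trivial for `n = exp(G)`. Hence every `A_{x,α}` has order
dividing `exp(Out G) * exp(G)`, and the hypothesis bounds this product by `|G|`: the `p`-part of
`exp(G)` is absorbed by the factor `p ^ ν_p(exp G)` of the hypothesis, its `p'`-part divides the
`p'`-part of `|G|`.
-/

section Affine

variable {G : Type*} [Group G]

lemma Aff_apply (x : G) (α : G ≃* G) (g : G) : Aff x α g = x * α g := rfl

lemma exists_Aff_pow_eq (x : G) (α : MulAut G) (n : ℕ) :
    ∃ y : G, Aff x α ^ n = Aff y (α ^ n) := by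
  induction n with
  | zero => exact ⟨1, by ext g; simp [Aff_apply]⟩
  | succ n ih =>
    obtain ⟨y, hy⟩ := ih
    refine ⟨x * α y, ?_⟩
    ext g
    rw [pow_succ', hy, Equiv.Perm.mul_apply, Aff_apply, Aff_apply, Aff_apply, pow_succ',
      MulAut.mul_apply, map_mul, mul_assoc]

lemma Aff_conj_pow_apply (y c : G) (n : ℕ) (g : G) :
    (Aff y (MulAut.conj c) ^ n) g = (y * c) ^ n * g * c⁻¹ ^ n := by
  induction n with
  | zero => simp
  | succ n ih =>
    rw [pow_succ', Equiv.Perm.mul_apply, ih, Aff_apply]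
    simp only [MulAut.conj_apply, pow_succ', mul_assoc]
    rw [pow_mul_comm']

lemma Aff_conj_pow_exponent (y c : G) : Aff y (MulAut.conj c) ^ Monoid.exponent G = 1 := by
  ext g
  simp [Aff_conj_pow_apply, Monoid.pow_exponent_eq_one]

lemma pow_exponent_Out_mem_Inn (α : MulAut G) : α ^ Monoid.exponent (Out G) ∈ Inn G := by
  rw [← QuotientGroup.eq_one_iff, QuotientGroup.mk_pow]
  exact Monoid.pow_exponent_eq_one _

lemma orderOf_Aff_dvd_exponent_Out_mul_exponent (x : G) (α : MulAut G) :
    orderOf (Aff x α) ∣ Monoid.exponent (Out G) * Monoid.exponent G := by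
  apply orderOf_dvd_of_pow_eq_one
  obtain ⟨c, hc⟩ := pow_exponent_Out_mem_Inn α
  obtain ⟨y, hy⟩ := exists_Aff_pow_eq x α (Monoid.exponent (Out G))
  rw [pow_mul, hy, ← hc, Aff_conj_pow_exponent]

end Affine

lemma Nat.mul_le_of_dvd_of_mul_ordProj_le {k n e p : ℕ} (hkn : k ∣ n) (hn : n ≠ 0)
    (he : e * p ^ k.factorization p ≤ p ^ n.factorization p) : e * k ≤ n :=
  calc e * k = e * p ^ k.factorization p * (k / p ^ k.factorization p) := by
        rw [mul_assoc, Nat.ordProj_mul_ordCompl_eq_self]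
    _ ≤ p ^ n.factorization p * (n / p ^ n.factorization p) :=
        Nat.mul_le_mul he <| Nat.le_of_dvd (Nat.ordCompl_pos p hn)
          (Nat.ordCompl_dvd_ordCompl_of_dvd hkn p)
    _ = n := Nat.ordProj_mul_ordCompl_eq_self n p

theorem stmt_7_general {G : Type*} [Group G] [Fintype G] {p : ℕ}
    (hineq : p ^ (2 * (Monoid.exponent G).factorization p) * Monoid.exponent (Out G) ≤
      p ^ ((Fintype.card G).factorization p)) :
    ∀ α : G ≃* G,
      (Finset.univ.lcm fun x : G => orderOf (Aff x α)) ≤ Fintype.card G := by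
  intro α
  have : Finite (Out G) := Quotient.finite _
  have hpos : 0 < Monoid.exponent (Out G) * Monoid.exponent G :=
    Nat.pos_of_ne_zero (mul_ne_zero Monoid.exponent_ne_zero_of_finite
      Monoid.exponent_ne_zero_of_finite)
  have hle : Monoid.exponent (Out G) * Monoid.exponent G ≤ Fintype.card G := by
    refine Nat.mul_le_of_dvd_of_mul_ordProj_le Group.exponent_dvd_card Fintype.card_ne_zero
      (le_trans ?_ hineq)
    rw [two_mul, pow_add, mul_comm, mul_assoc]
    exact Nat.le_mul_of_pos_left _ (Nat.ordProj_pos _ p)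
  exact (Nat.le_of_dvd hpos <| Finset.lcm_dvd fun x _ =>
    orderOf_Aff_dvd_exponent_Out_mul_exponent x α).trans hle

theorem stmt_7 {G : Type*} [Group G] [Fintype G] {p : ℕ} (hp : p.Prime)
    (hpG : p ∣ Fintype.card G)
    (hineq : p ^ (2 * (Monoid.exponent G).factorization p) * Monoid.exponent (Out G) ≤
      p ^ ((Fintype.card G).factorization p)) :
    ∀ α : G ≃* G,
      (Finset.univ.lcm fun x : G => orderOf (Aff x α)) ≤ Fintype.card G :=
  stmt_7_general hineq
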